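/- Let Γ = ⟨α_1, …, α_k⟩ ⊂ ℕ^d be an affine semigroup, fix i ≤ k, and let z be a minimal element (with respect to the componentwise order on ℕ^k) of Z_Γ(α_i + Γ) with z_i = 0. If w ∈ ℕ^k satisfies w_i ≠ 0 and φ_Γ(w) = φ_Γ(z), then gcd(z,w) = 0 (equivalently, z and w have disjoint supports) and dist(z,w) = max(|z|, |w|). -/
import Mathlib


open Finset

/-- The factorization homomorphism `φ_Γ : ℕ^k → ℕ^d` determined by the
generators `α 1, …, α k`. -/
def phi {d k : ℕ} (α : Fin k → Fin d → ℕ) (z : Fin k → ℕ) : Fin d → ℕ :=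
  ∑ i, z i • α i

/-- The length `|z|` of a factorization. -/
def len {k : ℕ} (z : Fin k → ℕ) : ℕ := ∑ i, z i

/-- The greatest common divisor `gcd(z,w)` of two factorizations. -/
def gcdF {k : ℕ} (z w : Fin k → ℕ) : Fin k → ℕ := fun i => min (z i) (w i)

/-- The distance `dist(z,w) = max(|z − gcd(z,w)|, |w − gcd(z,w)|)`. -/
def distF {k : ℕ} (z w : Fin k → ℕ) : ℕ :=
  max (len (z - gcdF z w)) (len (w - gcdF z w))

/-- `Z_Γ(α_i + Γ)`, the set of factorizations of elements of `α_i + Γ`. -/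
def ZIdeal {d k : ℕ} (α : Fin k → Fin d → ℕ) (i : Fin k) : Set (Fin k → ℕ) :=
  {z | ∃ x : Fin k → ℕ, phi α z = α i + phi α x}

lemma phi_add {d k : ℕ} (α : Fin k → Fin d → ℕ) (a b : Fin k → ℕ) :
    phi α (a + b) = phi α a + phi α b := by
  simp [phi, add_smul, Finset.sum_add_distrib]

lemma phi_single {d k : ℕ} (α : Fin k → Fin d → ℕ) (i : Fin k) :
    phi α (Pi.single i 1) = α i := by
  simp [phi, Pi.single_apply, ite_smul]

/-- If `z` is a minimal element (componentwise order) of `Z_Γ(α_i + Γ)` with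
`z i = 0`, and `w ∈ ℕ^k` satisfies `w i ≠ 0` and `φ_Γ(w) = φ_Γ(z)`, then
`gcd(z,w) = 0` (i.e. `z` and `w` have disjoint supports) and
`dist(z,w) = max(|z|, |w|)`. -/
theorem stmt14 {d k : ℕ} (α : Fin k → Fin d → ℕ) (i : Fin k)
    (z : Fin k → ℕ) (hz : z ∈ ZIdeal α i)
    (hzmin : ∀ w ∈ ZIdeal α i, w ≤ z → w = z)
    (hzi : z i = 0)
    (w : Fin k → ℕ) (hwi : w i ≠ 0) (hw : phi α w = phi α z) :
    gcdF z w = 0 ∧ distF z w = max (len z) (len w) := by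
  set g := gcdF z w with hg
  have hgz : g ≤ z := fun j => min_le_left _ _
  have hgw : g ≤ w := fun j => min_le_right _ _
  have hgi : g i = 0 := by simp [hg, gcdF, hzi]
  -- cancellation: phi α (z - g) = phi α (w - g)
  have hzsplit : phi α (z - g) + phi α g = phi α z := by
    rw [← phi_add, tsub_add_cancel_of_le hgz]
  have hwsplit : phi α (w - g) + phi α g = phi α w := by
    rw [← phi_add, tsub_add_cancel_of_le hgw]
  have hkey : phi α (z - g) = phi α (w - g) := by
    have : phi α (z - g) + phi α g = phi α (w - g) + phi α g := by
      rw [hzsplit, hwsplit, hw]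
    exact add_right_cancel this
  -- (w - g) i ≠ 0, hence Pi.single i 1 ≤ w - g
  have hwgi : 1 ≤ (w - g) i := by
    have : (w - g) i = w i - g i := rfl
    omega
  have hsle : Pi.single i 1 ≤ w - g := by
    intro j
    rcases eq_or_ne j i with rfl | hj
    · simpa using hwgi
    · simp [Pi.single_apply, hj]
  have hmem : z - g ∈ ZIdeal α i := by
    refine ⟨(w - g) - Pi.single i 1, ?_⟩
    rw [hkey]
    have : phi α ((w - g) - Pi.single i 1 + Pi.single i 1) = phi α (w - g) := by
      rw [tsub_add_cancel_of_le hsle]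
    rw [← this, phi_add, phi_single, add_comm]
  have hzg : z - g = z := hzmin _ hmem (fun j => tsub_le_self)
  have hg0 : g = 0 := by
    funext j
    have h1 : g j ≤ z j := hgz j
    have h2 : z j - g j = z j := congrFun hzg j
    simpa using by omega
  refine ⟨hg0, ?_⟩
  simp [distF, ← hg, hg0]
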